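/- Let M be an n × n random matrix whose rows are independent and uniformly sub-Gaussian with respect to the Euclidean norm, i.e., there exist B, b > 0 with P(‖Rᵢ‖₂ ≥ t) ≤ B·exp(−b·t²) for all i and t > 0. Then there exist constants C, c > 0 such that P(‖M‖_op > A√n) ≤ C·exp(−c·A·n) for all A ≥ C. -/

import Mathlib

/-!
The operator norm is at most the Frobenius norm, whose square is the sum of the squared row
norms `‖Rᵢ‖²`. A sub-Gaussian tail gives `𝔼 exp (b ‖Rᵢ‖² / 2) ≤ 1 + B` (layer-cake formula), so
by independence and Markov's inequality `P(∑ ‖Rᵢ‖² ≥ A² n) ≤ (1 + B)ⁿ exp (-b A² n / 2)`. Once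
`A ≥ 1 + 2 log (1 + B) / b`, the factor `(1 + B)ⁿ = exp (n log (1 + B))` is absorbed by
`exp (-b (A² - A) n / 2)`.
-/

open MeasureTheory ProbabilityTheory Real Set
open scoped ENNReal

lemma Matrix.norm_toEuclideanCLM_le_sqrt_sum_sq {n : Type*} [Fintype n] [DecidableEq n]
    (M : Matrix n n ℝ) :
    ‖Matrix.toEuclideanCLM (𝕜 := ℝ) M‖ ≤ √(∑ i, ∑ j, M i j ^ 2) := by
  refine ContinuousLinearMap.opNorm_le_bound _ (sqrt_nonneg _) fun x => ?_
  have hsq : ‖Matrix.toEuclideanCLM (𝕜 := ℝ) M x‖ ^ 2 ≤ (∑ i, ∑ j, M i j ^ 2) * ‖x‖ ^ 2 := by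
    have happly : ∀ i, Matrix.toEuclideanCLM (𝕜 := ℝ) M x i = ∑ j, M i j * x j := fun i =>
      congrFun (Matrix.ofLp_toEuclideanCLM M x) i
    simp only [EuclideanSpace.norm_sq_eq, Real.norm_eq_abs, sq_abs, happly]
    rw [Finset.sum_mul]
    exact Finset.sum_le_sum fun i _ => Finset.sum_mul_sq_le_sq_mul_sq _ _ _
  refine (pow_le_pow_iff_left₀ (norm_nonneg _) (by positivity) two_ne_zero).1 ?_
  rwa [mul_pow, sq_sqrt (by positivity)]

section SubGaussianTail

variable {Ω : Type*} [MeasurableSpace Ω] {μ : Measure Ω} {B b : ℝ}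

lemma measure_le_exp_sq_le_of_tail {X : Ω → ℝ} (hb : 0 < b) (hX0 : ∀ ω, 0 ≤ X ω)
    (htail : ∀ t > 0, μ {ω | t ≤ X ω} ≤ ENNReal.ofReal (B * exp (-b * t ^ 2)))
    {t : ℝ} (ht : 1 < t) :
    μ {ω | t ≤ exp (b / 2 * X ω ^ 2)} ≤ ENNReal.ofReal (B * t ^ (-2 : ℝ)) := by
  have hlog : 0 < log t := log_pos ht
  set s := √(2 * log t / b)
  have hs2 : s ^ 2 = 2 * log t / b := sq_sqrt (by positivity)
  have hsub : {ω | t ≤ exp (b / 2 * X ω ^ 2)} ⊆ {ω | s ≤ X ω} := fun ω hω => by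
    have : log t ≤ b / 2 * X ω ^ 2 := (log_le_iff_le_exp (by linarith)).2 hω
    rw [mem_ofPred_eq, ← sqrt_sq (hX0 ω)]
    exact sqrt_le_sqrt ((div_le_iff₀ hb).2 (by linarith))
  calc μ {ω | t ≤ exp (b / 2 * X ω ^ 2)} ≤ μ {ω | s ≤ X ω} := measure_mono hsub
    _ ≤ ENNReal.ofReal (B * exp (-b * s ^ 2)) := htail s (sqrt_pos.2 (by positivity))
    _ = ENNReal.ofReal (B * t ^ (-2 : ℝ)) := by
      rw [hs2, rpow_def_of_pos (by linarith)]
      congr 3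
      field_simp

lemma lintegral_exp_sq_le_of_tail [IsProbabilityMeasure μ] {X : Ω → ℝ} (hB : 0 ≤ B)
    (hb : 0 < b) (hX : Measurable X) (hX0 : ∀ ω, 0 ≤ X ω)
    (htail : ∀ t > 0, μ {ω | t ≤ X ω} ≤ ENNReal.ofReal (B * exp (-b * t ^ 2))) :
    ∫⁻ ω, ENNReal.ofReal (exp (b / 2 * X ω ^ 2)) ∂μ ≤ ENNReal.ofReal (1 + B) := by
  rw [lintegral_eq_lintegral_meas_le μ (ae_of_all μ fun ω => (exp_pos _).le)
      ((hX.pow_const 2).const_mul _).exp.aemeasurable,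
    ← Ioc_union_Ioi_eq_Ioi zero_le_one,
    lintegral_union measurableSet_Ioi (Ioc_disjoint_Ioi le_rfl),
    ENNReal.ofReal_add zero_le_one hB, ENNReal.ofReal_one]
  gcongr ?_ + ?_
  · calc _ ≤ ∫⁻ _ in Ioc (0 : ℝ) 1, 1 :=
          setLIntegral_mono measurable_const fun _ _ => prob_le_one
      _ = 1 := by simp
  · have hint : IntegrableOn (fun t : ℝ => B * t ^ (-2 : ℝ)) (Ioi 1) :=
      (integrableOn_Ioi_rpow_of_lt (by norm_num) one_pos).const_mul B
    calc _ ≤ ∫⁻ t in Ioi (1 : ℝ), ENNReal.ofReal (B * t ^ (-2 : ℝ)) :=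
          setLIntegral_mono (by measurability) fun _ ht =>
            measure_le_exp_sq_le_of_tail hb hX0 htail ht
      _ = ENNReal.ofReal (∫ t in Ioi (1 : ℝ), B * t ^ (-2 : ℝ)) := by
          refine (ofReal_integral_eq_lintegral_ofReal hint ?_).symm
          filter_upwards [ae_restrict_mem measurableSet_Ioi] with t (ht : 1 < t)
          have : 0 < t := one_pos.trans ht
          positivity
      _ = ENNReal.ofReal B := by
          rw [integral_const_mul, integral_Ioi_rpow_of_lt (by norm_num) one_pos]
          norm_num

lemma measure_le_sum_sq_le_of_iIndepFun {ι : Type*} [Fintype ι] {X : ι → Ω → ℝ}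
    (hB : 0 ≤ B) (hb : 0 < b) (hX : iIndepFun X μ) (hXm : ∀ i, Measurable (X i))
    (hX0 : ∀ i ω, 0 ≤ X i ω)
    (htail : ∀ i, ∀ t > 0, μ {ω | t ≤ X i ω} ≤ ENNReal.ofReal (B * exp (-b * t ^ 2)))
    (s : ℝ) :
    μ {ω | s ≤ ∑ i, X i ω ^ 2} ≤
      ENNReal.ofReal ((1 + B) ^ Fintype.card ι * exp (-(b / 2) * s)) := by
  have := hX.isProbabilityMeasure
  set g : ι → Ω → ℝ≥0∞ := fun i ω => ENNReal.ofReal (exp (b / 2 * X i ω ^ 2))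
  have hgm : ∀ i, Measurable (g i) := fun i =>
    (((hXm i).pow_const 2).const_mul _).exp.ennreal_ofReal
  have hg : iIndepFun g μ :=
    hX.comp _ fun _ => ((measurable_id.pow_const 2).const_mul _).exp.ennreal_ofReal
  have hevent : {ω | s ≤ ∑ i, X i ω ^ 2} =
      {ω | ENNReal.ofReal (exp (b / 2 * s)) ≤ ∏ i, g i ω} := by
    ext ω
    simp only [mem_ofPred_eq, g, ← ENNReal.ofReal_prod_of_nonneg fun i _ => (exp_pos _).le,
      ← exp_sum, ← Finset.mul_sum]
    rw [ENNReal.ofReal_le_ofReal_iff (exp_pos _).le, exp_le_exp,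
      mul_le_mul_iff_right₀ (by positivity)]
  calc μ {ω | s ≤ ∑ i, X i ω ^ 2}
      ≤ (∫⁻ ω, ∏ i, g i ω ∂μ) / ENNReal.ofReal (exp (b / 2 * s)) := by
        rw [hevent]
        exact meas_ge_le_lintegral_div (Finset.measurable_prod _ fun i _ => hgm i).aemeasurable
          (ENNReal.ofReal_pos.2 (exp_pos _)).ne' ENNReal.ofReal_ne_top
    _ ≤ ENNReal.ofReal (1 + B) ^ Fintype.card ι / ENNReal.ofReal (exp (b / 2 * s)) := by
        rw [lintegral_prod_eq_prod_lintegral_of_indepFun _ _ hg hgm, ← Finset.card_univ,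
          ← Finset.prod_const]
        gcongr with i
        exact lintegral_exp_sq_le_of_tail hB hb (hXm i) (hX0 i) (htail i)
    _ = _ := by
        rw [← ENNReal.ofReal_pow (by linarith), ← ENNReal.ofReal_div_of_pos (exp_pos _),
          div_eq_mul_inv, ← exp_neg, neg_mul]

end SubGaussianTail

lemma one_add_pow_mul_exp_le {B b A : ℝ} (hB : 0 ≤ B) (hb : 0 < b)
    (hA : 1 + 2 * log (1 + B) / b ≤ A) (n : ℕ) :
    (1 + B) ^ n * exp (-(b / 2) * (A ^ 2 * n)) ≤ exp (-(b / 2) * A * n) := by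
  have hlog : 0 ≤ log (1 + B) := log_nonneg (by linarith)
  have hL : 0 ≤ 2 * log (1 + B) / b := by positivity
  have hLA : log (1 + B) ≤ b / 2 * (A - 1) := by
    have := (div_le_iff₀ hb).1 (show 2 * log (1 + B) / b ≤ A - 1 by linarith)
    linarith
  have hAL : n * log (1 + B) ≤ n * (b / 2 * A * (A - 1)) := by
    have := mul_le_mul_of_nonneg_left (show 1 ≤ A by linarith)
      (show 0 ≤ b / 2 * (A - 1) by linarith)
    gcongr
    linarith
  rw [← exp_log (show 0 < 1 + B by linarith), ← exp_nat_mul, ← exp_add, exp_le_exp]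
  linarith

theorem opNorm_bound_indep_subGaussian_rows_general {Ω : Type*} [MeasurableSpace Ω]
    (μ : Measure Ω)
    (B b : ℝ) (hB : 0 < B) (hb : 0 < b) :
    ∃ C c : ℝ, 0 < C ∧ 0 < c ∧
      ∀ (n : ℕ) (M : Ω → Matrix (Fin n) (Fin n) ℝ),
        (∀ i j, Measurable fun ω => M ω i j) →
        ProbabilityTheory.iIndepFun
          (fun i : Fin n => fun ω => M ω i) μ →
        (∀ i, ∀ t > 0,
          μ {ω | t ≤ Real.sqrt (∑ j, (M ω i j) ^ 2)} ≤
            ENNReal.ofReal (B * Real.exp (-b * t ^ 2))) →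
        ∀ A ≥ C,
          μ {ω | A * Real.sqrt n < ‖Matrix.toEuclideanCLM (𝕜 := ℝ) (M ω)‖} ≤
            ENNReal.ofReal (C * Real.exp (-c * A * n)) := by
  have hC : 1 ≤ 1 + 2 * log (1 + B) / b :=
    le_add_of_nonneg_right (div_nonneg (mul_nonneg zero_le_two (log_nonneg (by linarith))) hb.le)
  refine ⟨1 + 2 * log (1 + B) / b, b / 2, by linarith, by positivity, ?_⟩
  intro n M hM hindep htail A hA
  have hA0 : 0 ≤ A := by linarith
  set R : Fin n → Ω → ℝ := fun i ω => √(∑ j, M ω i j ^ 2)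
  have hR : iIndepFun R μ := hindep.comp _ fun _ =>
    (Finset.measurable_sum _ fun j _ => (measurable_pi_apply j).pow_const 2).sqrt
  have hRm : ∀ i, Measurable (R i) := fun i =>
    (Finset.measurable_sum _ fun j _ => (hM i j).pow_const 2).sqrt
  have hevent : {ω | A * √n < ‖Matrix.toEuclideanCLM (𝕜 := ℝ) (M ω)‖} ⊆
      {ω | A ^ 2 * n ≤ ∑ i, R i ω ^ 2} := fun ω hω => by
    have := (lt_sqrt (by positivity)).1 (hω.trans_le (M ω).norm_toEuclideanCLM_le_sqrt_sum_sq)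
    simp only [R, sq_sqrt (Finset.sum_nonneg fun j _ => sq_nonneg _)]
    rw [mul_pow, sq_sqrt n.cast_nonneg] at this
    exact this.le
  calc _ ≤ μ {ω | A ^ 2 * n ≤ ∑ i, R i ω ^ 2} := measure_mono hevent
    _ ≤ ENNReal.ofReal ((1 + B) ^ n * exp (-(b / 2) * (A ^ 2 * n))) := by
        simpa only [Fintype.card_fin] using measure_le_sum_sq_le_of_iIndepFun hB.le hb hR hRm
          (fun _ _ => sqrt_nonneg _) htail (A ^ 2 * n)
    _ ≤ _ := ENNReal.ofReal_le_ofReal <| (one_add_pow_mul_exp_le hB.le hb hA n).trans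
        (le_mul_of_one_le_left (exp_pos _).le hC)

theorem opNorm_bound_indep_subGaussian_rows {Ω : Type*} [MeasurableSpace Ω]
    (μ : Measure Ω) [IsProbabilityMeasure μ]
    (B b : ℝ) (hB : 0 < B) (hb : 0 < b) :
    ∃ C c : ℝ, 0 < C ∧ 0 < c ∧
      ∀ (n : ℕ) (M : Ω → Matrix (Fin n) (Fin n) ℝ),
        (∀ i j, Measurable fun ω => M ω i j) →
        ProbabilityTheory.iIndepFun
          (fun i : Fin n => fun ω => M ω i) μ →
        (∀ i, ∀ t > 0,
          μ {ω | t ≤ Real.sqrt (∑ j, (M ω i j) ^ 2)} ≤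
            ENNReal.ofReal (B * Real.exp (-b * t ^ 2))) →
        ∀ A ≥ C,
          μ {ω | A * Real.sqrt n < ‖Matrix.toEuclideanCLM (𝕜 := ℝ) (M ω)‖} ≤
            ENNReal.ofReal (C * Real.exp (-c * A * n)) :=
  opNorm_bound_indep_subGaussian_rows_general μ B b hB hb
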